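/- Let a, b, c ∈ Aut(X*) be defined by the wreath recursion a = σ(b,a), b = σ(c,b), c = (c,a). Then the group G = ⟨a,b,c⟩ is torsion free: every nontrivial element of G has infinite order. -/

import Mathlib

/-!
For a tree automorphism `f` let `chi f ∈ ZMod 2` be the parity of the number of vertices of
levels 0, 1 and 2 at which `f` acts nontrivially. Each level parity is a homomorphism, hence so
is `chi`, and the automorphisms all of whose sections lie in its kernel form a subgroup. This
subgroup contains `a`, `b`, `c`: their sections are again among `a`, `b`, `c`, and `chi` vanishes
on each of them.

A nontrivial tree automorphism fixes some vertex `u` and swaps its two children; so do its odd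
powers, so it has no odd order. If it is moreover an involution, its section `s` at `u` is an
involution active at the root, whence `s₁ s₀ = 1`; then the parities of levels 1 and 2 of `s`
vanish and `chi s = 1`. So the subgroup has no nontrivial elements of order 2 either.
-/

/-- `WRec s f f₀ f₁` says that the tree automorphism `f` of the binary rooted tree
`X* = List Bool` is given by the wreath recursion `f = σˢ(f₀, f₁)`:
the root permutation of `f` is the transposition `σ` when `s = true` and is trivial when
`s = false`, the section of `f` at the letter `0 = false` is `f₀`, and the section of `f`
at the letter `1 = true` is `f₁`. -/
def WRec (s : Bool) (f f₀ f₁ : Equiv.Perm (List Bool)) : Prop :=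
  f [] = [] ∧ (∀ w : List Bool, f (false :: w) = s :: f₀ w) ∧
    (∀ w : List Bool, f (true :: w) = (!s) :: f₁ w)

namespace BinaryTree

def sectionAt (f : List Bool → List Bool) (v : List Bool) : List Bool → List Bool :=
  fun w => (f (v ++ w)).drop v.length

/-- Only injectivity is required: a length-preserving injection maps each finite level onto
itself. -/
structure IsTreeAut (f : List Bool → List Bool) : Prop where
  length_apply : ∀ w, (f w).length = w.length
  prefix_apply : ∀ v w, f v <+: f (v ++ w)
  injective : Function.Injective f

theorem sectionAt_sectionAt (f : List Bool → List Bool) (u v : List Bool) :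
    sectionAt (sectionAt f u) v = sectionAt f (u ++ v) := by
  funext w
  simp [sectionAt, List.drop_drop]

@[simp]
theorem sectionAt_id (v : List Bool) : sectionAt id v = id := by
  funext w
  simp [sectionAt]

theorem isTreeAut_id : IsTreeAut id where
  length_apply _ := rfl
  prefix_apply := List.prefix_append
  injective := Function.injective_id

namespace IsTreeAut

variable {f g : List Bool → List Bool}

theorem apply_nil (hf : IsTreeAut f) : f [] = [] :=
  List.length_eq_zero_iff.mp (hf.length_apply [])

theorem apply_append (hf : IsTreeAut f) (v w : List Bool) :
    f (v ++ w) = f v ++ sectionAt f v w := by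
  rw [sectionAt, ← hf.length_apply v]
  exact (List.prefix_iff_eq_append.mp (hf.prefix_apply v w)).symm

theorem sectionAt_isTreeAut (hf : IsTreeAut f) (v : List Bool) : IsTreeAut (sectionAt f v) where
  length_apply w := by simp [sectionAt, hf.length_apply]
  prefix_apply u w := by
    simpa [sectionAt, List.append_assoc] using (hf.prefix_apply (v ++ u) w).drop v.length
  injective w₁ w₂ h := by
    have := hf.injective (by rw [hf.apply_append, hf.apply_append, h] : f (v ++ w₁) = f (v ++ w₂))
    exact List.append_cancel_left this

theorem comp (hf : IsTreeAut f) (hg : IsTreeAut g) : IsTreeAut (f ∘ g) where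
  length_apply w := by simp [hf.length_apply, hg.length_apply]
  prefix_apply v w := by
    rw [Function.comp_apply, Function.comp_apply, hg.apply_append v w]
    exact hf.prefix_apply (g v) _
  injective := hf.injective.comp hg.injective

theorem sectionAt_comp (hg : IsTreeAut g) (v : List Bool) :
    sectionAt (f ∘ g) v = sectionAt f (g v) ∘ sectionAt g v := by
  funext w
  change (f (g (v ++ w))).drop v.length = (f (g v ++ sectionAt g v w)).drop (g v).length
  rw [← hg.apply_append, hg.length_apply]

theorem symm {e : Equiv.Perm (List Bool)} (he : IsTreeAut e) : IsTreeAut e.symm where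
  length_apply w := by simpa using (he.length_apply (e.symm w)).symm
  prefix_apply v w := by
    set z := e.symm (v ++ w)
    have hz : (z.take v.length).length = v.length := by
      simp [z, List.length_take, ← he.length_apply (e.symm _)]
    have hpre : e (z.take v.length) <+: v ++ w := by
      simpa [z] using he.prefix_apply (z.take v.length) (z.drop v.length)
    have hv : e (z.take v.length) = v := by
      rw [List.prefix_iff_eq_take.mp hpre, he.length_apply, hz, List.take_left]
    rw [← hv, Equiv.symm_apply_apply]
    exact List.take_prefix _ _
  injective := e.symm.injective

theorem root_cases (hf : IsTreeAut f) :
    (f [false] = [false] ∧ f [true] = [true]) ∨ (f [false] = [true] ∧ f [true] = [false]) := by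
  have one : ∀ x, ∃ y, f [x] = [y] := fun x => List.length_eq_one_iff.mp (hf.length_apply [x])
  obtain ⟨y₀, h₀⟩ := one false
  obtain ⟨y₁, h₁⟩ := one true
  have hne : y₀ ≠ y₁ := fun h => absurd (hf.injective (h₀.trans (h ▸ h₁.symm))) (by decide)
  cases y₀ <;> cases y₁ <;> simp_all

end IsTreeAut

def rootAct (f : List Bool → List Bool) : ZMod 2 :=
  if (f [false]).head? = some true then 1 else 0

/-- `levelParity n f` is the parity of the number of vertices of level `n` at which the
section of `f` acts nontrivially on the first letter. -/
def levelParity : ℕ → (List Bool → List Bool) → ZMod 2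
  | 0, f => rootAct f
  | n + 1, f => levelParity n (sectionAt f [false]) + levelParity n (sectionAt f [true])

@[simp]
theorem levelParity_id (n : ℕ) : levelParity n id = 0 := by
  induction n with
  | zero => simp [levelParity, rootAct]
  | succ n ih => simp [levelParity, ih]

variable {f g : List Bool → List Bool}

theorem IsTreeAut.rootAct_comp (hf : IsTreeAut f) (hg : IsTreeAut g) :
    rootAct (f ∘ g) = rootAct f + rootAct g := by
  rcases hg.root_cases with ⟨hg₀, -⟩ | ⟨hg₀, -⟩ <;>
    rcases hf.root_cases with ⟨hf₀, hf₁⟩ | ⟨hf₀, hf₁⟩ <;>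
    simp [rootAct, hg₀, hf₀, hf₁, CharTwo.add_self_eq_zero]

theorem IsTreeAut.levelParity_comp (n : ℕ) (hf : IsTreeAut f) (hg : IsTreeAut g) :
    levelParity n (f ∘ g) = levelParity n f + levelParity n g := by
  induction n generalizing f g with
  | zero => exact hf.rootAct_comp hg
  | succ n ih =>
    have ih' x y := ih (hf.sectionAt_isTreeAut [y]) (hg.sectionAt_isTreeAut [x])
    simp only [levelParity, hg.sectionAt_comp]
    rcases hg.root_cases with ⟨hg₀, hg₁⟩ | ⟨hg₀, hg₁⟩ <;>
      rw [hg₀, hg₁, ih', ih'] <;> ring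

def chi (f : List Bool → List Bool) : ZMod 2 :=
  levelParity 0 f + levelParity 1 f + levelParity 2 f

theorem IsTreeAut.chi_comp (hf : IsTreeAut f) (hg : IsTreeAut g) :
    chi (f ∘ g) = chi f + chi g := by
  simp only [chi, hf.levelParity_comp _ hg]
  ring

@[simp]
theorem chi_id : chi id = 0 := by
  simp [chi]

theorem IsTreeAut.levelParity_succ_eq_zero (hf : IsTreeAut f) (hff : f ∘ f = id)
    (hroot : f [false] = [true]) (n : ℕ) : levelParity (n + 1) f = 0 := by
  have hsec : sectionAt f [true] ∘ sectionAt f [false] = id := by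
    rw [← hroot, ← hf.sectionAt_comp, hff, sectionAt_id]
  rw [levelParity, add_comm, ← (hf.sectionAt_isTreeAut _).levelParity_comp n
    (hf.sectionAt_isTreeAut _), hsec, levelParity_id]

theorem IsTreeAut.chi_eq_one (hf : IsTreeAut f) (hff : f ∘ f = id)
    (hroot : f [false] = [true]) : chi f = 1 := by
  rw [chi, hf.levelParity_succ_eq_zero hff hroot, hf.levelParity_succ_eq_zero hff hroot]
  simp [levelParity, rootAct, hroot]

def chiTrivialSections : Subgroup (Equiv.Perm (List Bool)) where
  carrier := {g | IsTreeAut g ∧ ∀ v, chi (sectionAt g v) = 0}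
  one_mem' := ⟨isTreeAut_id, fun v => by simp⟩
  mul_mem' := by
    rintro f g ⟨hf, hfχ⟩ ⟨hg, hgχ⟩
    refine ⟨hf.comp hg, fun v => ?_⟩
    rw [Equiv.Perm.coe_mul, hg.sectionAt_comp, (hf.sectionAt_isTreeAut _).chi_comp
      (hg.sectionAt_isTreeAut _), hfχ, hgχ, add_zero]
  inv_mem' := by
    rintro f ⟨hf, hfχ⟩
    have hf' : IsTreeAut f.symm := hf.symm
    refine ⟨hf', fun v => ?_⟩
    have h := congrArg chi (hf'.sectionAt_comp (f := f) v)
    rwa [f.self_comp_symm, sectionAt_id, chi_id, (hf.sectionAt_isTreeAut _).chi_comp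
      (hf'.sectionAt_isTreeAut _), hfχ, zero_add, eq_comm] at h

theorem IsTreeAut.exists_swap_children {f : Equiv.Perm (List Bool)} (hf : IsTreeAut f) (hne : f ≠ 1) :
    ∃ u, f u = u ∧ f (u ++ [false]) = u ++ [true] ∧ f (u ++ [true]) = u ++ [false] := by
  obtain ⟨v, hv, hmin⟩ :=
    (InvImage.wf List.length wellFounded_lt).has_min {w | f w ≠ w} (DFunLike.ne_iff.mp hne)
  obtain rfl | ⟨u, x, rfl⟩ := v.eq_nil_or_concat
  · exact absurd hf.apply_nil hv
  have hu : f u = u := by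
    by_contra hu
    exact hmin u hu (by simp [InvImage])
  have happ : ∀ y, f (u ++ [y]) = u ++ sectionAt f u [y] := fun y => by
    rw [hf.apply_append, hu]
  rcases (hf.sectionAt_isTreeAut u).root_cases with ⟨h₀, h₁⟩ | ⟨h₀, h₁⟩
  · cases x <;> simp_all
  · exact ⟨u, hu, by rw [happ, h₀], by rw [happ, h₁]⟩

theorem IsTreeAut.pow_odd_ne_one {f : Equiv.Perm (List Bool)} (hf : IsTreeAut f) (hne : f ≠ 1)
    (k : ℕ) : f ^ (2 * k + 1) ≠ 1 := by
  obtain ⟨u, -, h₀, h₁⟩ := hf.exists_swap_children hne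
  have hsq : (f ^ 2) (u ++ [false]) = u ++ [false] := by simp [sq, h₀, h₁]
  intro hpow
  have := congrArg (· (u ++ [false])) hpow
  rw [pow_succ', pow_mul, Equiv.Perm.mul_apply,
    Equiv.Perm.pow_apply_eq_self_of_apply_eq_self hsq, h₀] at this
  simp at this

namespace chiTrivialSections

theorem eq_one_of_sq_eq_one {g : Equiv.Perm (List Bool)} (hg : g ∈ chiTrivialSections)
    (hsq : g ^ 2 = 1) : g = 1 := by
  by_contra hne
  obtain ⟨u, hu, h₀, -⟩ := hg.1.exists_swap_children hne
  have hinv : sectionAt g u ∘ sectionAt g u = id := by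
    have h := hg.1.sectionAt_comp (f := g) u
    rwa [hu, ← Equiv.Perm.coe_mul, ← sq, hsq, Equiv.Perm.coe_one, sectionAt_id, eq_comm] at h
  have hroot : sectionAt g u [false] = [true] := by simp [sectionAt, h₀]
  have := (hg.1.sectionAt_isTreeAut u).chi_eq_one hinv hroot
  rw [hg.2 u] at this
  exact zero_ne_one this

theorem not_isOfFinOrder {g : Equiv.Perm (List Bool)} (hg : g ∈ chiTrivialSections)
    (hne : g ≠ 1) : ¬IsOfFinOrder g := by
  intro hfin
  obtain ⟨m, hm⟩ | ⟨k, hk⟩ := Nat.even_or_odd (orderOf g)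
  · have hpos := hfin.orderOf_pos
    refine pow_ne_one_of_lt_orderOf (x := g) (n := m) (by omega) (by omega) ?_
    refine eq_one_of_sq_eq_one (pow_mem hg m) ?_
    rw [← pow_mul, mul_two, ← hm, pow_orderOf_eq_one]
  · exact hg.1.pow_odd_ne_one hne k (hk ▸ pow_orderOf_eq_one g)

end chiTrivialSections

theorem _root_.WRec.sectionAt_false {s : Bool} {f f₀ f₁ : Equiv.Perm (List Bool)}
    (h : WRec s f f₀ f₁) : sectionAt f [false] = f₀ := by
  funext w
  simp [sectionAt, h.2.1]

theorem _root_.WRec.sectionAt_true {s : Bool} {f f₀ f₁ : Equiv.Perm (List Bool)}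
    (h : WRec s f f₀ f₁) : sectionAt f [true] = f₁ := by
  funext w
  simp [sectionAt, h.2.2]

theorem _root_.WRec.rootAct_eq {s : Bool} {f f₀ f₁ : Equiv.Perm (List Bool)}
    (h : WRec s f f₀ f₁) : rootAct f = if s then 1 else 0 := by
  simp [rootAct, h.2.1]

def IsSelfSimilar (S : Set (Equiv.Perm (List Bool))) : Prop :=
  ∀ f ∈ S, ∃ s, ∃ f₀ ∈ S, ∃ f₁ ∈ S, WRec s f f₀ f₁

namespace IsSelfSimilar

variable {S : Set (Equiv.Perm (List Bool))}

theorem length_apply (hS : IsSelfSimilar S) (w : List Bool) :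
    ∀ f ∈ S, (f w).length = w.length := by
  induction w with
  | nil =>
    intro f hf
    obtain ⟨s, f₀, -, f₁, -, h⟩ := hS f hf
    simp [h.1]
  | cons x w ih =>
    intro f hf
    obtain ⟨s, f₀, hf₀, f₁, hf₁, h⟩ := hS f hf
    cases x <;> simp [h.2.1, h.2.2, ih _ hf₀, ih _ hf₁]

theorem prefix_apply (hS : IsSelfSimilar S) (v : List Bool) :
    ∀ f ∈ S, ∀ w, f v <+: f (v ++ w) := by
  induction v with
  | nil =>
    intro f hf w
    obtain ⟨s, f₀, -, f₁, -, h⟩ := hS f hf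
    rw [h.1]
    exact List.nil_prefix
  | cons x v ih =>
    intro f hf w
    obtain ⟨s, f₀, hf₀, f₁, hf₁, h⟩ := hS f hf
    cases x <;> simp [h.2.1, h.2.2, ih _ hf₀, ih _ hf₁]

theorem isTreeAut (hS : IsSelfSimilar S) {f : Equiv.Perm (List Bool)} (hf : f ∈ S) :
    IsTreeAut f :=
  ⟨fun w => hS.length_apply w f hf, fun v => hS.prefix_apply v f hf, f.injective⟩

theorem exists_sectionAt_eq (hS : IsSelfSimilar S) (v : List Bool) :
    ∀ f ∈ S, ∃ g ∈ S, sectionAt f v = g := by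
  induction v with
  | nil => exact fun f hf => ⟨f, hf, rfl⟩
  | cons x v ih =>
    intro f hf
    obtain ⟨s, f₀, hf₀, f₁, hf₁, h⟩ := hS f hf
    rw [← List.singleton_append, ← sectionAt_sectionAt]
    cases x
    · exact h.sectionAt_false ▸ ih f₀ hf₀
    · exact h.sectionAt_true ▸ ih f₁ hf₁

theorem subset_chiTrivialSections (hS : IsSelfSimilar S) (hχ : ∀ f ∈ S, chi f = 0) :
    S ⊆ chiTrivialSections := fun f hf => by
  refine ⟨hS.isTreeAut hf, fun v => ?_⟩
  obtain ⟨g, hg, hfg⟩ := hS.exists_sectionAt_eq v f hf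
  rw [hfg, hχ g hg]

end IsSelfSimilar

end BinaryTree

open BinaryTree

theorem boltenkov_group_torsion_free (a b c : Equiv.Perm (List Bool))
    (ha : WRec true a b a) (hb : WRec true b c b) (hc : WRec false c c a) :
    ∀ g ∈ Subgroup.closure {a, b, c}, g ≠ 1 → ¬ IsOfFinOrder g := by
  have hS : IsSelfSimilar {a, b, c} := by
    rintro f (rfl | rfl | rfl)
    exacts [⟨_, b, by simp, f, by simp, ha⟩, ⟨_, c, by simp, f, by simp, hb⟩,
      ⟨_, f, by simp, a, by simp, hc⟩]
  have hχ : ∀ f ∈ ({a, b, c} : Set (Equiv.Perm (List Bool))), chi f = 0 := by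
    rintro f (rfl | rfl | rfl) <;>
      simp only [chi, levelParity, ha.sectionAt_false, ha.sectionAt_true, hb.sectionAt_false,
        hb.sectionAt_true, hc.sectionAt_false, hc.sectionAt_true, ha.rootAct_eq, hb.rootAct_eq,
        hc.rootAct_eq] <;> decide
  intro g hg
  exact chiTrivialSections.not_isOfFinOrder
    (Subgroup.closure_le _ |>.mpr (hS.subset_chiTrivialSections hχ) hg)
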